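/- arXiv:1709.00404 — 5 statements merged into one kernel-verified Lean document; each statement's English description precedes it below -/
import Mathlib

section
/- With Δ(t) = q¹(t) - q²(t) the difference of two Hamiltonian trajectories, the second derivative of |Δ(t)|²/2 equals -Δ(t)ᵀ(∇U(q¹(t)) - ∇U(q²(t))) + |p¹(t) - p²(t)|². If U is α-strongly convex on a set S containing q¹(0) and q²(0), and the particles share the same initial momentum p¹(0) = p²(0) with q¹(0) ≠ q²(0), then (1/2) d²/dt² |Δ(t)|² at t = 0 is at most -α|Δ(0)|² < 0, so t = 0 is a strict local maximum of t ↦ |Δ(t)|². -/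
open Real
open scoped RealInnerProductSpace

/-- Second derivative of `|Δ(t)|²/2` for two Hamiltonian trajectories, and:
under `α`-strong convexity of `U` on `S`, equal initial momenta and distinct initial
positions in `S`, the second derivative at `0` is at most `-α|Δ(0)|² < 0` (after halving),
so `t = 0` is a strict local maximum of `t ↦ |Δ(t)|²`. -/
theorem stmt3 (d : ℕ) (α : ℝ) (hα : 0 < α)
    (S : Set (EuclideanSpace ℝ (Fin d)))
    (U : EuclideanSpace ℝ (Fin d) → ℝ)
    (gU : EuclideanSpace ℝ (Fin d) → EuclideanSpace ℝ (Fin d))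
    (hgrad : ∀ x, HasGradientAt U (gU x) x)
    (hgUc : Continuous gU)
    (hconv : ∀ q ∈ S, ∀ q' ∈ S, α * ‖q - q'‖ ^ 2 ≤ ⟪q - q', gU q - gU q'⟫)
    (q1 p1 q2 p2 : ℝ → EuclideanSpace ℝ (Fin d))
    (h1q : ∀ t, HasDerivAt q1 (p1 t) t)
    (h1p : ∀ t, HasDerivAt p1 (-(gU (q1 t))) t)
    (h2q : ∀ t, HasDerivAt q2 (p2 t) t)
    (h2p : ∀ t, HasDerivAt p2 (-(gU (q2 t))) t) :
    (∀ t, HasDerivAt (fun s => ⟪q1 s - q2 s, p1 s - p2 s⟫)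
        (-⟪q1 t - q2 t, gU (q1 t) - gU (q2 t)⟫ + ‖p1 t - p2 t‖ ^ 2) t) ∧
    (q1 0 ∈ S → q2 0 ∈ S → p1 0 = p2 0 → q1 0 ≠ q2 0 →
      (-⟪q1 0 - q2 0, gU (q1 0) - gU (q2 0)⟫ + ‖p1 0 - p2 0‖ ^ 2
          ≤ -α * ‖q1 0 - q2 0‖ ^ 2) ∧
      (-α * ‖q1 0 - q2 0‖ ^ 2 < 0) ∧
      (∃ ε > 0, ∀ t : ℝ, t ≠ 0 → |t| < ε →
        ‖q1 t - q2 t‖ ^ 2 < ‖q1 0 - q2 0‖ ^ 2)) := by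
  have hΔd : ∀ t, HasDerivAt (fun s => q1 s - q2 s) (p1 t - p2 t) t :=
    fun t => (h1q t).sub (h2q t)
  have hPd : ∀ t, HasDerivAt (fun s => p1 s - p2 s) (-(gU (q1 t) - gU (q2 t))) t := by
    intro t
    have h := (h1p t).sub (h2p t)
    rw [neg_sub]
    rwa [neg_sub_neg] at h
  have hg : ∀ t, HasDerivAt (fun s => ⟪q1 s - q2 s, p1 s - p2 s⟫)
      (-⟪q1 t - q2 t, gU (q1 t) - gU (q2 t)⟫ + ‖p1 t - p2 t‖ ^ 2) t := by
    intro t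
    have h := HasDerivAt.inner ℝ (hΔd t) (hPd t)
    have heq : ⟪q1 t - q2 t, -(gU (q1 t) - gU (q2 t))⟫ + ⟪p1 t - p2 t, p1 t - p2 t⟫
        = -⟪q1 t - q2 t, gU (q1 t) - gU (q2 t)⟫ + ‖p1 t - p2 t‖ ^ 2 := by
      rw [inner_neg_right, real_inner_self_eq_norm_sq]
    rw [heq] at h
    exact h
  refine ⟨hg, ?_⟩
  intro hq1S hq2S hp0 hq0
  have hΔ0 : (0:ℝ) < ‖q1 0 - q2 0‖ ^ 2 := by
    have h : (0:ℝ) < ‖q1 0 - q2 0‖ := norm_pos_iff.2 (sub_ne_zero_of_ne hq0)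
    exact pow_pos h 2
  have hP0 : p1 0 - p2 0 = 0 := sub_eq_zero_of_eq hp0
  have h1 : -⟪q1 0 - q2 0, gU (q1 0) - gU (q2 0)⟫ + ‖p1 0 - p2 0‖ ^ 2
      ≤ -α * ‖q1 0 - q2 0‖ ^ 2 := by
    have := hconv (q1 0) hq1S (q2 0) hq2S
    rw [hP0]
    simp only [norm_zero]
    nlinarith
  have h2 : -α * ‖q1 0 - q2 0‖ ^ 2 < 0 := by nlinarith
  refine ⟨h1, h2, ?_⟩
  -- continuity of everything
  have hq1c : Continuous q1 := continuous_iff_continuousAt.2 fun t => (h1q t).continuousAt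
  have hq2c : Continuous q2 := continuous_iff_continuousAt.2 fun t => (h2q t).continuousAt
  have hp1c : Continuous p1 := continuous_iff_continuousAt.2 fun t => (h1p t).continuousAt
  have hp2c : Continuous p2 := continuous_iff_continuousAt.2 fun t => (h2p t).continuousAt
  set G : ℝ → ℝ := fun t => -⟪q1 t - q2 t, gU (q1 t) - gU (q2 t)⟫ + ‖p1 t - p2 t‖ ^ 2 with hGdef
  have hGc : Continuous G := by
    apply Continuous.add
    · exact ((hq1c.sub hq2c).inner ((hgUc.comp hq1c).sub (hgUc.comp hq2c))).neg
    · exact ((hp1c.sub hp2c).norm).pow 2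
  have hG0 : G 0 < 0 := lt_of_le_of_lt h1 h2
  obtain ⟨ε, hε, hball⟩ : ∃ ε > 0, ∀ t, |t| < ε → G t < 0 := by
    have := (hGc.continuousAt (x := 0)).eventually_lt continuousAt_const hG0
    rw [Metric.eventually_nhds_iff] at this
    obtain ⟨ε, hε, h⟩ := this
    exact ⟨ε, hε, fun t ht => h (by simpa [Real.dist_eq] using ht)⟩
  set g : ℝ → ℝ := fun s => ⟪q1 s - q2 s, p1 s - p2 s⟫ with hgdef
  have hg0 : g 0 = 0 := by
    show ⟪q1 0 - q2 0, p1 0 - p2 0⟫ = 0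
    rw [hP0, inner_zero_right]
  have hganti : StrictAntiOn g (Set.Ioo (-ε) ε) := by
    apply strictAntiOn_of_deriv_neg (convex_Ioo _ _)
    · exact Continuous.continuousOn
        (continuous_iff_continuousAt.2 fun t => (hg t).continuousAt)
    · intro x hx
      rw [interior_Ioo] at hx
      rw [(hg x).deriv]
      exact hball x (abs_lt.2 ⟨hx.1, hx.2⟩)
  have hFd : ∀ t, HasDerivAt (fun s => ⟪q1 s - q2 s, q1 s - q2 s⟫) (2 * g t) t := by
    intro t
    have h := HasDerivAt.inner ℝ (hΔd t) (hΔd t)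
    have : ⟪q1 t - q2 t, p1 t - p2 t⟫ + ⟪p1 t - p2 t, q1 t - q2 t⟫ = 2 * g t := by
      show _ = 2 * ⟪q1 t - q2 t, p1 t - p2 t⟫
      rw [real_inner_comm (p1 t - p2 t)]; ring
    rwa [this] at h
  have hFc : Continuous (fun s => ⟪q1 s - q2 s, q1 s - q2 s⟫) :=
    continuous_iff_continuousAt.2 fun t => (hFd t).continuousAt
  have key : ∀ t : ℝ, t ≠ 0 → |t| < ε →
      ⟪q1 t - q2 t, q1 t - q2 t⟫ < ⟪q1 0 - q2 0, q1 0 - q2 0⟫ := by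
    intro t ht htε
    rw [abs_lt] at htε
    rcases ht.lt_or_gt with htneg | htpos
    · -- t < 0 : F strictly increasing on [t,0]
      have hmono : StrictMonoOn (fun s => ⟪q1 s - q2 s, q1 s - q2 s⟫) (Set.Icc t 0) := by
        apply strictMonoOn_of_deriv_pos (convex_Icc _ _) hFc.continuousOn
        intro x hx
        rw [interior_Icc] at hx
        rw [(hFd x).deriv]
        have hxI : x ∈ Set.Ioo (-ε) ε := ⟨lt_trans htε.1 hx.1, lt_trans hx.2 hε⟩
        have h0I : (0:ℝ) ∈ Set.Ioo (-ε) ε := ⟨neg_lt_zero.2 hε, hε⟩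
        have := hganti hxI h0I hx.2
        rw [hg0] at this
        linarith
      exact hmono (Set.left_mem_Icc.2 htneg.le) (Set.right_mem_Icc.2 htneg.le) htneg
    · -- 0 < t : F strictly decreasing on [0,t]
      have hanti : StrictAntiOn (fun s => ⟪q1 s - q2 s, q1 s - q2 s⟫) (Set.Icc 0 t) := by
        apply strictAntiOn_of_deriv_neg (convex_Icc _ _) hFc.continuousOn
        intro x hx
        rw [interior_Icc] at hx
        rw [(hFd x).deriv]
        have hxI : x ∈ Set.Ioo (-ε) ε := ⟨lt_trans (neg_lt_zero.2 hε) hx.1, lt_trans hx.2 htε.2⟩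
        have h0I : (0:ℝ) ∈ Set.Ioo (-ε) ε := ⟨neg_lt_zero.2 hε, hε⟩
        have := hganti h0I hxI hx.1
        rw [hg0] at this
        linarith
      exact hanti (Set.left_mem_Icc.2 htpos.le) (Set.right_mem_Icc.2 htpos.le) htpos
  refine ⟨ε, hε, fun t ht htε => ?_⟩
  have := key t ht htε
  rwa [real_inner_self_eq_norm_sq, real_inner_self_eq_norm_sq] at this
end

section
/- (Lemma 1, exact flow contraction.) Suppose the potential U : ℝᵈ → ℝ₊ is twice continuously differentiable with globally β-Lipschitz gradient, and U is α-strongly convex on a compact set S of positive Lebesgue measure. Then for any compact set A ⊂ S × S × ℝᵈ, there exists a trajectory length T > 0 such that for any t ∈ (0, T], there exists ρ ∈ [0, 1) with |Φₜ°(q₀¹, p₀) - Φₜ°(q₀², p₀)| ≤ ρ|q₀¹ - q₀²| for all (q₀¹, q₀², p₀) ∈ A, where Φₜ° denotes the position component of the Hamiltonian flow at time t. -/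
/-!
Let `Δ = q¹ - q²` for two trajectories with the same initial momentum, so that `Δ'(0) = 0` and
`Δ'' = -(∇U(q¹) - ∇U(q²))`. By Grönwall, `Δ(s) - Δ(0) = O(s²) ‖Δ(0)‖` on short times, so the force
difference is, up to `O(s²) ‖Δ(0)‖`, that of the two initial points shifted by the common small
translation `w = q²(s) - q²(0)` (small uniformly over the compact set `A`). As the Hessian is
uniformly continuous near `S`, strong convexity survives such translations with constant `α / 2`.
Hence `⟪Δ(0), Δ''⟫ ≤ -(α/2 - O(t²)) ‖Δ(0)‖²`; integrating twice and expanding `‖Δ(t)‖²` gives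
`‖Δ(t)‖² ≤ (1 - (α/2 - O(t²)) t²) ‖Δ(0)‖²`.
-/

open Real MeasureTheory Set Filter Topology Metric
open scoped RealInnerProductSpace

section

variable {E : Type*} [NormedAddCommGroup E] [InnerProductSpace ℝ E]

theorem contDiff_one_of_hasGradientAt [CompleteSpace E] {U : E → ℝ} {g : E → E}
    (hU : ContDiff ℝ 2 U) (hg : ∀ q, HasGradientAt U (g q) q) : ContDiff ℝ 1 g := by
  rw [← gradient_eq hg]
  exact (InnerProductSpace.toDual ℝ E).symm.contDiff.comp (hU.fderiv_right (by norm_num))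

theorem exists_pos_forall_inner_sub_translate_ge [ProperSpace E] {g : E → E}
    (hg : ContDiff ℝ 1 g) {S : Set E} (hS : Bornology.IsBounded S) {α : ℝ}
    (hmono : ∀ q ∈ S, ∀ q' ∈ S, α * ‖q - q'‖ ^ 2 ≤ ⟪q - q', g q - g q'⟫) {ε : ℝ} (hε : 0 < ε) :
    ∃ δ > 0, ∀ q ∈ S, ∀ q' ∈ S, ∀ w : E, ‖w‖ ≤ δ →
      (α - ε) * ‖q - q'‖ ^ 2 ≤ ⟪q - q', g (q + w) - g (q' + w)⟫ := by
  obtain ⟨R, hR⟩ := hS.subset_closedBall 0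
  obtain ⟨δ, hδ, hfderiv⟩ := Metric.uniformContinuousOn_iff.1
    ((isCompact_closedBall (0 : E) (R + 1)).uniformContinuousOn_of_continuous
      (hg.continuous_fderiv one_ne_zero).continuousOn) ε hε
  refine ⟨min (δ / 2) 1, by positivity, fun q hq q' hq' w hw => ?_⟩
  have hdiff : Differentiable ℝ g := hg.differentiable one_ne_zero
  have hderiv : ∀ x, HasFDerivAt (fun x => g (x + w) - g x)
      (fderiv ℝ g (x + w) - fderiv ℝ g x) x := fun x =>
    ((hdiff _).hasFDerivAt.comp x ((hasFDerivAt_id x).add_const w)).sub (hdiff x).hasFDerivAt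
  have hbound : ∀ x ∈ closedBall (0 : E) R, ‖fderiv ℝ g (x + w) - fderiv ℝ g x‖ ≤ ε := by
    intro x hx
    rw [mem_closedBall_zero_iff] at hx
    have hw1 : ‖w‖ ≤ 1 := hw.trans (min_le_right _ _)
    have hw2 : ‖w‖ < δ := hw.trans_lt ((min_le_left _ _).trans_lt (half_lt_self hδ))
    rw [← dist_eq_norm]
    refine (hfderiv (x + w) ?_ x ?_ ?_).le <;>
      simp only [mem_closedBall_zero_iff, dist_eq_norm, add_sub_cancel_left]
    · linarith [norm_add_le x w]
    · linarith
    · exact hw2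
  have hmvt := (convex_closedBall (0 : E) R).norm_image_sub_le_of_norm_hasFDerivWithin_le
    (fun x _ => (hderiv x).hasFDerivWithinAt) hbound (hR hq') (hR hq)
  have hperturb : |⟪q - q', (g (q + w) - g q) - (g (q' + w) - g q')⟫| ≤ ε * ‖q - q'‖ ^ 2 :=
    calc _ ≤ ‖q - q'‖ * ‖(g (q + w) - g q) - (g (q' + w) - g q')‖ := abs_real_inner_le_norm _ _
      _ ≤ ‖q - q'‖ * (ε * ‖q - q'‖) := by gcongr
      _ = ε * ‖q - q'‖ ^ 2 := by ring
  have hsplit : ⟪q - q', g (q + w) - g (q' + w)⟫ =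
      ⟪q - q', g q - g q'⟫ + ⟪q - q', (g (q + w) - g q) - (g (q' + w) - g q')⟫ := by
    rw [← inner_add_right]; congr 1; abel
  linarith [hmono q hq q' hq', (abs_le.1 hperturb).1]

theorem le_add_mul_add_sq_of_hasDerivAt_le {φ φ' φ'' : ℝ → ℝ} {C t : ℝ}
    (hφ : ∀ s, HasDerivAt φ (φ' s) s) (hφ' : ∀ s, HasDerivAt φ' (φ'' s) s)
    (hC : ∀ s ∈ Icc 0 t, φ'' s ≤ C) (ht : 0 ≤ t) :
    φ t ≤ φ 0 + φ' 0 * t + C / 2 * t ^ 2 := by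
  have hslope : ∀ s ∈ Icc 0 t, φ' s ≤ φ' 0 + C * s :=
    image_le_of_deriv_right_le_deriv_boundary (B := fun s => φ' 0 + C * s)
      (fun s _ => (hφ' s).continuousAt.continuousWithinAt) (fun s _ => (hφ' s).hasDerivWithinAt)
      (by simp) (by fun_prop)
      (fun s _ => (((hasDerivAt_id s).const_mul C).const_add (φ' 0)).hasDerivWithinAt)
      (fun s hs => by simpa using hC s (Ico_subset_Icc_self hs))
  refine image_le_of_deriv_right_le_deriv_boundary
      (B := fun s => φ 0 + φ' 0 * s + C / 2 * s ^ 2)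
      (fun s _ => (hφ s).continuousAt.continuousWithinAt) (fun s _ => (hφ s).hasDerivWithinAt)
      (by simp) (by fun_prop) (fun s _ => ?_)
      (fun s hs => hslope s (Ico_subset_Icc_self hs)) ⟨ht, le_rfl⟩
  exact ((((hasDerivAt_id s).const_mul (φ' 0)).const_add (φ 0)).add
    ((hasDerivAt_pow 2 s).const_mul (C / 2))).hasDerivWithinAt.congr_deriv (by simp; ring)

structure IsHamiltonianTrajectory (g : E → E) (q p : ℝ → E) : Prop where
  hasDerivAt_position : ∀ t, HasDerivAt q (p t) t
  hasDerivAt_momentum : ∀ t, HasDerivAt p (-g (q t)) t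

/-- `exp (max 1 β * t)` is the Grönwall factor; the two terms bound the force error and the
squared second-order deviation of `q¹ - q²` from its initial value. -/
noncomputable def contractionDefect (β t : ℝ) : ℝ :=
  β ^ 2 * (exp (max 1 β * t) + exp (max 1 β * t) ^ 2) * t ^ 2

namespace IsHamiltonianTrajectory

variable {g : E → E} {β : ℝ} {q₁ p₁ q₂ p₂ : ℝ → E}

theorem norm_sub_le_exp (h₁ : IsHamiltonianTrajectory g q₁ p₁)
    (h₂ : IsHamiltonianTrajectory g q₂ p₂) (hLip : ∀ x y, ‖g x - g y‖ ≤ β * ‖x - y‖)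
    (hp : p₁ 0 = p₂ 0) {t : ℝ} (ht : 0 ≤ t) :
    ‖q₁ t - q₂ t‖ ≤ ‖q₁ 0 - q₂ 0‖ * exp (max 1 β * t) := by
  set f : ℝ → E × E := fun s => (q₁ s - q₂ s, p₁ s - p₂ s)
  have hf : ∀ s, HasDerivAt f (p₁ s - p₂ s, -(g (q₁ s) - g (q₂ s))) s := fun s =>
    ((h₁.1 s).sub (h₂.1 s)).prodMk (((h₁.2 s).sub (h₂.2 s)).congr_deriv (by abel))
  have hbound : ∀ s, ‖(p₁ s - p₂ s, -(g (q₁ s) - g (q₂ s)))‖ ≤ max 1 β * ‖f s‖ + 0 := by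
    intro s
    have hfst : ‖q₁ s - q₂ s‖ ≤ ‖f s‖ := norm_fst_le (f s)
    have hsnd : ‖p₁ s - p₂ s‖ ≤ ‖f s‖ := norm_snd_le (f s)
    rw [Prod.norm_def, add_zero, norm_neg]
    refine max_le ?_ ((hLip _ _).trans ?_)
    · nlinarith [le_max_left 1 β, norm_nonneg (p₁ s - p₂ s)]
    · nlinarith [le_max_left 1 β, le_max_right 1 β, norm_nonneg (q₁ s - q₂ s)]
  have hgronwall := norm_le_gronwallBound_of_norm_deriv_right_le (f := f) (a := 0) (b := t)
    (δ := ‖q₁ 0 - q₂ 0‖) (fun s _ => (hf s).continuousAt.continuousWithinAt)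
    (fun s _ => (hf s).hasDerivWithinAt) (by simp [f, hp]) (fun s _ => hbound s) t ⟨ht, le_rfl⟩
  rw [gronwallBound_ε0, sub_zero] at hgronwall
  exact (norm_fst_le (f t)).trans hgronwall

theorem norm_momentum_sub_le (h₁ : IsHamiltonianTrajectory g q₁ p₁)
    (h₂ : IsHamiltonianTrajectory g q₂ p₂) (hLip : ∀ x y, ‖g x - g y‖ ≤ β * ‖x - y‖)
    (hβ : 0 ≤ β) (hp : p₁ 0 = p₂ 0) {s t : ℝ} (hs : s ∈ Icc 0 t) :
    ‖p₁ s - p₂ s‖ ≤ β * exp (max 1 β * t) * t * ‖q₁ 0 - q₂ 0‖ := by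
  have hforce : ∀ u ∈ Ico 0 t,
      ‖-(g (q₁ u) - g (q₂ u))‖ ≤ β * exp (max 1 β * t) * ‖q₁ 0 - q₂ 0‖ := fun u hu =>
    calc
      _ ≤ β * ‖q₁ u - q₂ u‖ := by rw [norm_neg]; exact hLip _ _
      _ ≤ β * (‖q₁ 0 - q₂ 0‖ * exp (max 1 β * t)) := by
        gcongr
        refine (h₁.norm_sub_le_exp h₂ hLip hp hu.1).trans ?_
        gcongr
        exact hu.2.le
      _ = _ := by ring
  have hmvt := norm_image_sub_le_of_norm_deriv_le_segment'
    (fun u _ => ((h₁.2 u).sub (h₂.2 u)).hasDerivWithinAt.congr_deriv (by abel)) hforce s hs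
  simp only [Pi.sub_apply, hp, sub_self, sub_zero] at hmvt
  refine hmvt.trans ?_
  rw [mul_right_comm]
  gcongr
  exact hs.2

theorem norm_sub_sub_sub_le (h₁ : IsHamiltonianTrajectory g q₁ p₁)
    (h₂ : IsHamiltonianTrajectory g q₂ p₂) (hLip : ∀ x y, ‖g x - g y‖ ≤ β * ‖x - y‖)
    (hβ : 0 ≤ β) (hp : p₁ 0 = p₂ 0) {s t : ℝ} (hs : s ∈ Icc 0 t) :
    ‖(q₁ s - q₂ s) - (q₁ 0 - q₂ 0)‖ ≤ β * exp (max 1 β * t) * t ^ 2 * ‖q₁ 0 - q₂ 0‖ := by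
  have hmvt := norm_image_sub_le_of_norm_deriv_le_segment'
    (fun u _ => ((h₁.1 u).sub (h₂.1 u)).hasDerivWithinAt)
    (fun u hu => h₁.norm_momentum_sub_le h₂ hLip hβ hp (Ico_subset_Icc_self hu)) s hs
  have hB : 0 ≤ β * exp (max 1 β * t) * t * ‖q₁ 0 - q₂ 0‖ :=
    mul_nonneg (mul_nonneg (mul_nonneg hβ (exp_pos _).le) (hs.1.trans hs.2)) (norm_nonneg _)
  calc _ ≤ β * exp (max 1 β * t) * t * ‖q₁ 0 - q₂ 0‖ * (s - 0) := hmvt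
    _ ≤ β * exp (max 1 β * t) * t * ‖q₁ 0 - q₂ 0‖ * t := by
      rw [sub_zero]; exact mul_le_mul_of_nonneg_left hs.2 hB
    _ = _ := by ring

theorem norm_sub_sq_le (h₁ : IsHamiltonianTrajectory g q₁ p₁)
    (h₂ : IsHamiltonianTrajectory g q₂ p₂) (hLip : ∀ x y, ‖g x - g y‖ ≤ β * ‖x - y‖)
    (hβ : 0 ≤ β) (hp : p₁ 0 = p₂ 0) {a δ t : ℝ} (ht : 0 ≤ t)
    (hmono : ∀ w, ‖w‖ ≤ δ → a * ‖q₁ 0 - q₂ 0‖ ^ 2 ≤ ⟪q₁ 0 - q₂ 0, g (q₁ 0 + w) - g (q₂ 0 + w)⟫)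
    (hdrift : ∀ s ∈ Icc 0 t, ‖q₂ s - q₂ 0‖ ≤ δ) :
    ‖q₁ t - q₂ t‖ ^ 2 ≤ (1 - (a - contractionDefect β t) * t ^ 2) * ‖q₁ 0 - q₂ 0‖ ^ 2 := by
  have hdev := fun s (hs : s ∈ Icc 0 t) => h₁.norm_sub_sub_sub_le h₂ hLip hβ hp hs
  set Δ₀ := q₁ 0 - q₂ 0 with hΔ₀
  set C := exp (max 1 β * t)
  have hforce : ∀ s ∈ Icc 0 t,
      (a - β ^ 2 * C * t ^ 2) * ‖Δ₀‖ ^ 2 ≤ ⟪Δ₀, g (q₁ s) - g (q₂ s)⟫ := by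
    intro s hs
    set w := q₂ s - q₂ 0
    have hsplit : ⟪Δ₀, g (q₁ s) - g (q₂ s)⟫ =
        ⟪Δ₀, g (q₁ 0 + w) - g (q₂ 0 + w)⟫ + ⟪Δ₀, g (q₁ s) - g (q₁ 0 + w)⟫ := by
      rw [← inner_add_right, show q₂ 0 + w = q₂ s by simp [w]]; congr 1; abel
    have herr : |⟪Δ₀, g (q₁ s) - g (q₁ 0 + w)⟫| ≤ ‖Δ₀‖ * (β * (β * C * t ^ 2 * ‖Δ₀‖)) := by
      refine (abs_real_inner_le_norm _ _).trans (mul_le_mul_of_nonneg_left ?_ (norm_nonneg _))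
      refine (hLip _ _).trans (mul_le_mul_of_nonneg_left ?_ hβ)
      rw [show q₁ s - (q₁ 0 + w) = (q₁ s - q₂ s) - Δ₀ by simp only [w, Δ₀]; abel]
      exact hdev s hs
    linarith [hmono w (hdrift s hs), (abs_le.1 herr).1]
  have hφ : ∀ s, HasDerivAt (fun s => ⟪Δ₀, q₁ s - q₂ s⟫) ⟪Δ₀, p₁ s - p₂ s⟫ s := fun s => by
    simpa using (hasDerivAt_const s Δ₀).inner ℝ ((h₁.1 s).sub (h₂.1 s))
  have hφ' : ∀ s, HasDerivAt (fun s => ⟪Δ₀, p₁ s - p₂ s⟫) (-⟪Δ₀, g (q₁ s) - g (q₂ s)⟫) s :=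
    fun s => ((hasDerivAt_const s Δ₀).inner ℝ ((h₁.2 s).sub (h₂.2 s))).congr_deriv <| by
      simp only [inner_zero_left, add_zero, inner_sub_right, inner_neg_right]
      ring
  have hinner := le_add_mul_add_sq_of_hasDerivAt_le hφ hφ'
    (fun s hs => neg_le_neg (hforce s hs)) ht
  simp only [hp, sub_self, inner_zero_right, zero_mul, add_zero] at hinner
  rw [← hΔ₀, real_inner_self_eq_norm_sq] at hinner
  have hdevt := pow_le_pow_left₀ (norm_nonneg _) (hdev t ⟨ht, le_rfl⟩) 2
  have hexpand := norm_sub_sq_real (q₁ t - q₂ t) Δ₀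
  rw [real_inner_comm] at hexpand
  rw [contractionDefect]
  linear_combination hdevt + 2 * hinner - hexpand

end IsHamiltonianTrajectory

theorem tendsto_contractionDefect_zero (β : ℝ) :
    Tendsto (contractionDefect β) (𝓝 0) (𝓝 0) := by
  have : Continuous (contractionDefect β) := by unfold contractionDefect; fun_prop
  simpa [contractionDefect] using this.tendsto 0

theorem eventually_forall_norm_flow_sub_le {Q P : E → E → ℝ → E}
    (hQ : ∀ q₀ p₀ t, HasDerivAt (Q q₀ p₀) (P q₀ p₀ t) t) (hQ₀ : ∀ q₀ p₀, Q q₀ p₀ 0 = q₀)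
    (hP : Continuous fun z : E × E × ℝ => P z.1 z.2.1 z.2.2) {K : Set (E × E)}
    (hK : IsCompact K) {ε : ℝ} (hε : 0 < ε) :
    ∀ᶠ t in 𝓝 (0 : ℝ), ∀ x ∈ K, ∀ s ∈ Icc 0 t, ‖Q x.1 x.2 s - x.1‖ ≤ ε := by
  have hPK : Continuous fun y : (E × E) × ℝ => P y.1.1 y.1.2 y.2 :=
    hP.comp (f := fun y : (E × E) × ℝ => (y.1.1, y.1.2, y.2)) (by fun_prop)
  obtain ⟨M, hM⟩ :=
    (hK.prod (isCompact_Icc (a := (0 : ℝ)) (b := 1))).exists_bound_of_continuousOn hPK.continuousOn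
  have hMt : Tendsto (fun t => max M 0 * t) (𝓝 0) (𝓝 0) := by
    simpa using (continuous_const_mul (max M 0)).tendsto 0
  filter_upwards [eventually_le_nhds one_pos, hMt.eventually_le_const hε]
    with t ht1 htε x hx s hs
  have hdrift := norm_image_sub_le_of_norm_deriv_le_segment' (f := Q x.1 x.2) (C := max M 0)
    (fun u _ => (hQ _ _ u).hasDerivWithinAt)
    (fun u hu => (hM (x, u) ⟨hx, hu.1, hu.2.le.trans (hs.2.trans ht1)⟩).trans (le_max_left _ _))
    s ⟨hs.1, le_rfl⟩
  rw [hQ₀, sub_zero] at hdrift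
  exact hdrift.trans ((mul_le_mul_of_nonneg_left hs.2 (le_max_right _ _)).trans htε)

end

theorem stmt4_general (d : ℕ) (α β : ℝ) (hα : 0 < α) (hβ : 0 < β)
    (U : EuclideanSpace ℝ (Fin d) → ℝ)
    (hU : ContDiff ℝ 2 U)
    (gU : EuclideanSpace ℝ (Fin d) → EuclideanSpace ℝ (Fin d))
    (hgrad : ∀ q, HasGradientAt U (gU q) q)
    (hLip : ∀ q q', ‖gU q - gU q'‖ ≤ β * ‖q - q'‖)
    (S : Set (EuclideanSpace ℝ (Fin d))) (hS : IsCompact S)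
    (hconv : ∀ q ∈ S, ∀ q' ∈ S, α * ‖q - q'‖ ^ 2 ≤ ⟪q - q', gU q - gU q'⟫)
    (Q P : EuclideanSpace ℝ (Fin d) → EuclideanSpace ℝ (Fin d) → ℝ →
      EuclideanSpace ℝ (Fin d))
    (hflowq : ∀ q₀ p₀ t, HasDerivAt (Q q₀ p₀) (P q₀ p₀ t) t)
    (hflowp : ∀ q₀ p₀ t, HasDerivAt (P q₀ p₀) (-(gU (Q q₀ p₀ t))) t)
    (hinitq : ∀ q₀ p₀, Q q₀ p₀ 0 = q₀) (hinitp : ∀ q₀ p₀, P q₀ p₀ 0 = p₀)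
    (hcont : Continuous fun z : (EuclideanSpace ℝ (Fin d) × EuclideanSpace ℝ (Fin d) × ℝ) =>
      (Q z.1 z.2.1 z.2.2, P z.1 z.2.1 z.2.2))
    (A : Set (EuclideanSpace ℝ (Fin d) × EuclideanSpace ℝ (Fin d) × EuclideanSpace ℝ (Fin d)))
    (hA : IsCompact A) (hAS : A ⊆ S ×ˢ S ×ˢ Set.univ) :
    ∃ T > 0, ∀ t ∈ Set.Ioc (0 : ℝ) T, ∃ ρ ∈ Set.Ico (0 : ℝ) 1,
      ∀ z ∈ A, ‖Q z.1 z.2.2 t - Q z.2.1 z.2.2 t‖ ≤ ρ * ‖z.1 - z.2.1‖ := by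
  obtain ⟨δ, hδ, hmono⟩ := exists_pos_forall_inner_sub_translate_ge
    (contDiff_one_of_hasGradientAt hU hgrad) hS.isBounded hconv (half_pos hα)
  rw [sub_half] at hmono
  have hsmall := (eventually_forall_norm_flow_sub_le hflowq hinitq (continuous_snd.comp hcont)
    (hA.image (f := fun z => (z.2.1, z.2.2)) (by fun_prop)) hδ).and
    ((tendsto_contractionDefect_zero β).eventually_lt_const (half_pos hα))
  obtain ⟨T, hT, hTsmall⟩ := mem_nhdsGT_iff_exists_Ioc_subset.1 (nhdsWithin_le_nhds hsmall)
  refine ⟨T, hT, fun t ht => ?_⟩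
  obtain ⟨hdrift, hdefect⟩ := hTsmall ht
  have hrate : 0 < (α / 2 - contractionDefect β t) * t ^ 2 :=
    mul_pos (by linarith) (pow_pos ht.1 2)
  refine ⟨√(1 - (α / 2 - contractionDefect β t) * t ^ 2),
    ⟨sqrt_nonneg _, (sqrt_lt' one_pos).2 (by linarith)⟩, fun z hz => ?_⟩
  have htraj : ∀ q₀ p₀, IsHamiltonianTrajectory gU (Q q₀ p₀) (P q₀ p₀) :=
    fun q₀ p₀ => ⟨hflowq q₀ p₀, hflowp q₀ p₀⟩
  have hsq := (htraj z.1 z.2.2).norm_sub_sq_le (htraj z.2.1 z.2.2) hLip hβ.le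
    (by rw [hinitp, hinitp]) ht.1.le
    (fun w hw => by simpa only [hinitq] using hmono _ (hAS hz).1 _ (hAS hz).2.1 w hw)
    (fun s hs => by simpa only [hinitq] using hdrift _ ⟨z, hz, rfl⟩ s hs)
  rw [hinitq, hinitq] at hsq
  calc ‖Q z.1 z.2.2 t - Q z.2.1 z.2.2 t‖ = √(‖Q z.1 z.2.2 t - Q z.2.1 z.2.2 t‖ ^ 2) :=
        (sqrt_sq (norm_nonneg _)).symm
    _ ≤ √((1 - (α / 2 - contractionDefect β t) * t ^ 2) * ‖z.1 - z.2.1‖ ^ 2) :=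
        sqrt_le_sqrt hsq
    _ = _ := by rw [sqrt_mul' _ (sq_nonneg _), sqrt_sq (norm_nonneg _)]

/-- Lemma 1 (exact flow contraction): for a potential `U ≥ 0`, twice continuously
differentiable with globally `β`-Lipschitz gradient `gU` and `α`-strongly convex on a
compact set `S` of positive Lebesgue measure, and for the Hamiltonian flow `(Q, P)`
solving `dq/dt = p`, `dp/dt = -∇U(q)`, any compact set `A ⊆ S × S × ℝᵈ` admits a
trajectory length `T > 0` such that for any `t ∈ (0, T]` there is `ρ ∈ [0,1)` with
`|Q(q₀¹,p₀,t) - Q(q₀²,p₀,t)| ≤ ρ|q₀¹ - q₀²|` for all `(q₀¹,q₀²,p₀) ∈ A`. -/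
theorem stmt4 (d : ℕ) (α β : ℝ) (hα : 0 < α) (hβ : 0 < β)
    (U : EuclideanSpace ℝ (Fin d) → ℝ) (hU0 : ∀ q, 0 ≤ U q)
    (hU : ContDiff ℝ 2 U)
    (gU : EuclideanSpace ℝ (Fin d) → EuclideanSpace ℝ (Fin d))
    (hgrad : ∀ q, HasGradientAt U (gU q) q)
    (hLip : ∀ q q', ‖gU q - gU q'‖ ≤ β * ‖q - q'‖)
    (S : Set (EuclideanSpace ℝ (Fin d))) (hS : IsCompact S) (hSpos : 0 < volume S)
    (hconv : ∀ q ∈ S, ∀ q' ∈ S, α * ‖q - q'‖ ^ 2 ≤ ⟪q - q', gU q - gU q'⟫)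
    (Q P : EuclideanSpace ℝ (Fin d) → EuclideanSpace ℝ (Fin d) → ℝ →
      EuclideanSpace ℝ (Fin d))
    (hflowq : ∀ q₀ p₀ t, HasDerivAt (Q q₀ p₀) (P q₀ p₀ t) t)
    (hflowp : ∀ q₀ p₀ t, HasDerivAt (P q₀ p₀) (-(gU (Q q₀ p₀ t))) t)
    (hinitq : ∀ q₀ p₀, Q q₀ p₀ 0 = q₀) (hinitp : ∀ q₀ p₀, P q₀ p₀ 0 = p₀)
    (hcont : Continuous fun z : (EuclideanSpace ℝ (Fin d) × EuclideanSpace ℝ (Fin d) × ℝ) =>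
      (Q z.1 z.2.1 z.2.2, P z.1 z.2.1 z.2.2))
    (A : Set (EuclideanSpace ℝ (Fin d) × EuclideanSpace ℝ (Fin d) × EuclideanSpace ℝ (Fin d)))
    (hA : IsCompact A) (hAS : A ⊆ S ×ˢ S ×ˢ Set.univ) :
    ∃ T > 0, ∀ t ∈ Set.Ioc (0 : ℝ) T, ∃ ρ ∈ Set.Ico (0 : ℝ) 1,
      ∀ z ∈ A, ‖Q z.1 z.2.2 t - Q z.2.1 z.2.2 t‖ ≤ ρ * ‖z.1 - z.2.1‖ :=
  stmt4_general d α β hα hβ U hU gU hgrad hLip S hS hconv Q P hflowq hflowp hinitq hinitp hcont A hA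
    hAS
end

section
/- The Taylor expansion bound in the proof of Lemma 1: with Δ(t) = q¹(t) - q²(t), G₀ = ∇U(q₀¹) - ∇U(q₀²), and G* the third-order remainder term, combining α-strong convexity, β-Lipschitzness of ∇U, and Young's inequality yields |Δ(t)|² ≤ (1 - αt² + t³/6 + β²t⁴/4 + β²t⁵/12)|Δ(0)|² + (t³/6 + t⁵/12 + t⁶/36)|G*|², where the expansion |Δ(t)|² = |Δ(0)|² - t²Δ(0)ᵀG₀ - (t³/3)Δ(0)ᵀG* + (t⁴/4)|G₀|² + (t⁵/6)G₀ᵀG* + (t⁶/36)|G*|² holds with Δ(t) = Δ(0) - (t²/2)G₀ - (t³/6)G*. -/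
open Real
open scoped RealInnerProductSpace

/-- The Taylor expansion bound in the proof of Lemma 1: with
`Δ(t) = Δ(0) - (t²/2)G₀ - (t³/6)G*`, strong convexity (`⟪Δ₀,G₀⟫ ≥ α|Δ₀|²`),
Lipschitzness (`|G₀| ≤ β|Δ₀|`) and Young's inequality yield the exact expansion of
`|Δ(t)|²` and the stated upper bound. -/
theorem stmt5 (d : ℕ) (α β t : ℝ) (hα : 0 < α) (hβ : 0 < β) (ht : 0 ≤ t)
    (Δ0 G0 Gs : EuclideanSpace ℝ (Fin d))
    (hconv : α * ‖Δ0‖ ^ 2 ≤ ⟪Δ0, G0⟫)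
    (hLip : ‖G0‖ ≤ β * ‖Δ0‖)
    (Δ : ℝ → EuclideanSpace ℝ (Fin d))
    (hΔ : ∀ s, Δ s = Δ0 - (s ^ 2 / 2) • G0 - (s ^ 3 / 6) • Gs) :
    ‖Δ t‖ ^ 2 = ‖Δ0‖ ^ 2 - t ^ 2 * ⟪Δ0, G0⟫ - (t ^ 3 / 3) * ⟪Δ0, Gs⟫
        + (t ^ 4 / 4) * ‖G0‖ ^ 2 + (t ^ 5 / 6) * ⟪G0, Gs⟫ + (t ^ 6 / 36) * ‖Gs‖ ^ 2 ∧
    ‖Δ t‖ ^ 2 ≤ (1 - α * t ^ 2 + t ^ 3 / 6 + β ^ 2 * t ^ 4 / 4 + β ^ 2 * t ^ 5 / 12) * ‖Δ0‖ ^ 2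
        + (t ^ 3 / 6 + t ^ 5 / 12 + t ^ 6 / 36) * ‖Gs‖ ^ 2 := by
  have hexp : ‖Δ t‖ ^ 2 = ‖Δ0‖ ^ 2 - t ^ 2 * ⟪Δ0, G0⟫ - (t ^ 3 / 3) * ⟪Δ0, Gs⟫
      + (t ^ 4 / 4) * ‖G0‖ ^ 2 + (t ^ 5 / 6) * ⟪G0, Gs⟫ + (t ^ 6 / 36) * ‖Gs‖ ^ 2 := by
    rw [hΔ t, ← real_inner_self_eq_norm_sq, ← real_inner_self_eq_norm_sq,
      ← real_inner_self_eq_norm_sq, ← real_inner_self_eq_norm_sq]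
    simp only [inner_sub_left, inner_sub_right, inner_smul_left, inner_smul_right,
      RCLike.ofReal_real_eq_id, id, conj_trivial, real_inner_comm G0 Δ0, real_inner_comm Gs Δ0,
      real_inner_comm Gs G0]
    ring
  refine ⟨hexp, ?_⟩
  rw [hexp]
  have h1 : |⟪Δ0, Gs⟫| ≤ ‖Δ0‖ * ‖Gs‖ := abs_real_inner_le_norm _ _
  have h2 : |⟪G0, Gs⟫| ≤ ‖G0‖ * ‖Gs‖ := abs_real_inner_le_norm _ _
  have h1' : -(‖Δ0‖ ^ 2 / 2 + ‖Gs‖ ^ 2 / 2) ≤ ⟪Δ0, Gs⟫ := by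
    nlinarith [abs_le.mp h1, sq_nonneg (‖Δ0‖ - ‖Gs‖)]
  have h2' : ⟪G0, Gs⟫ ≤ ‖G0‖ ^ 2 / 2 + ‖Gs‖ ^ 2 / 2 := by
    nlinarith [abs_le.mp h2, sq_nonneg (‖G0‖ - ‖Gs‖)]
  have hG : ‖G0‖ ^ 2 ≤ β ^ 2 * ‖Δ0‖ ^ 2 := by
    nlinarith [norm_nonneg G0, norm_nonneg Δ0]
  have ht2 : (0:ℝ) ≤ t ^ 2 := by positivity
  have ht3 : (0:ℝ) ≤ t ^ 3 := by positivity
  have ht4 : (0:ℝ) ≤ t ^ 4 := by positivity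
  have ht5 : (0:ℝ) ≤ t ^ 5 := by positivity
  nlinarith [mul_le_mul_of_nonneg_left hconv ht2, mul_le_mul_of_nonneg_left h1' ht3,
    mul_le_mul_of_nonneg_left h2' ht5, mul_le_mul_of_nonneg_left hG ht4,
    mul_le_mul_of_nonneg_left hG ht5]
end

section
/- The unbiasedness structure: let (Xₙ)ₙ≥₀ and (Yₙ)ₙ≥₀ be sequences with meeting time τ = inf{n ≥ 1 : Xₙ = Yₙ₋₁} finite, and suppose Xₙ = Yₙ₋₁ for all n ≥ τ (faithfulness). Then for any integers k ≤ m, the time-averaged estimator H_{k:m}(X,Y) = (m-k+1)⁻¹ Σ_{n=k}^m Hₙ(X,Y), where Hₙ(X,Y) = h(Xₙ) + Σ_{j=n+1}^{τ-1}{h(X_j) - h(Y_{j-1})}, equals (m-k+1)⁻¹ Σ_{n=k}^m h(Xₙ) + Σ_{n=k+1}^{τ-1} min(1, (n-k)/(m-k+1)) {h(Xₙ) - h(Yₙ₋₁)}. -/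
/-- The deterministic rearrangement identity for the time-averaged unbiased estimator:
`H_{k:m}(X,Y) = (m-k+1)⁻¹ Σ_{n=k}^m h(Xₙ)
  + Σ_{n=k+1}^{τ-1} min(1,(n-k)/(m-k+1)) (h(Xₙ) - h(Yₙ₋₁))`. -/
theorem stmt6 (d : ℕ) (h : EuclideanSpace ℝ (Fin d) → ℝ)
    (X Y : ℕ → EuclideanSpace ℝ (Fin d))
    (τ : ℕ) (hτ : 1 ≤ τ)
    (hfaithful : ∀ n, τ ≤ n → X n = Y (n - 1))
    (k m : ℕ) (hkm : k ≤ m)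
    (H : ℕ → ℝ)
    (hH : ∀ n, H n = h (X n) + ∑ j ∈ Finset.Icc (n + 1) (τ - 1), (h (X j) - h (Y (j - 1)))) :
    ((m : ℝ) - k + 1)⁻¹ * ∑ n ∈ Finset.Icc k m, H n
      = ((m : ℝ) - k + 1)⁻¹ * ∑ n ∈ Finset.Icc k m, h (X n)
        + ∑ n ∈ Finset.Icc (k + 1) (τ - 1),
            min 1 (((n : ℝ) - k) / ((m : ℝ) - k + 1)) * (h (X n) - h (Y (n - 1))) := by
  have hkm' : (k : ℝ) ≤ m := Nat.cast_le.mpr hkm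
  have hM : (0:ℝ) < (m:ℝ) - k + 1 := by linarith
  set M : ℝ := (m:ℝ) - k + 1 with hMdef
  set f : ℕ → ℝ := fun j => h (X j) - h (Y (j - 1)) with hf
  have key : ∑ n ∈ Finset.Icc k m, ∑ j ∈ Finset.Icc (n+1) (τ-1), f j
      = ∑ j ∈ Finset.Icc (k+1) (τ-1), min M ((j:ℝ) - k) * f j := by
    have step1 : ∀ n ∈ Finset.Icc k m,
        ∑ j ∈ Finset.Icc (n+1) (τ-1), f j
          = ∑ j ∈ Finset.Icc (k+1) (τ-1), if n + 1 ≤ j then f j else 0 := by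
      intro n hn
      rw [Finset.mem_Icc] at hn
      rw [← Finset.sum_filter]
      congr 1
      ext j
      simp only [Finset.mem_filter, Finset.mem_Icc]
      omega
    rw [Finset.sum_congr rfl step1, Finset.sum_comm]
    refine Finset.sum_congr rfl ?_
    intro j hj
    rw [Finset.mem_Icc] at hj
    rw [← Finset.sum_filter]
    have hfil : (Finset.Icc k m).filter (fun n => n + 1 ≤ j) = Finset.Icc k (min m (j-1)) := by
      ext n
      simp only [Finset.mem_filter, Finset.mem_Icc]
      omega
    rw [hfil, Finset.sum_const, Nat.card_Icc, nsmul_eq_mul]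
    congr 1
    have h1 : k ≤ min m (j - 1) := by omega
    rcases le_or_gt m (j-1) with hcase | hcase
    · have : min m (j-1) = m := min_eq_left hcase
      rw [this]
      have : min M ((j:ℝ) - k) = M := by
        apply min_eq_left
        have : (m:ℝ) + 1 ≤ j := by exact_mod_cast (by omega : m + 1 ≤ j)
        simp only [hMdef]; linarith
      rw [this, hMdef]
      push_cast [Nat.sub_add_cancel, h1]
      have : k ≤ m + 1 := by omega
      push_cast [Nat.cast_sub (by omega : k ≤ m + 1)]
      ring
    · have hmin : min m (j-1) = j - 1 := min_eq_right (le_of_lt hcase)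
      rw [hmin]
      have : min M ((j:ℝ) - k) = (j:ℝ) - k := by
        apply min_eq_right
        have : (j:ℝ) ≤ m := by exact_mod_cast (by omega : j ≤ m)
        simp only [hMdef]; linarith
      rw [this]
      have hkj : k ≤ j - 1 + 1 := by omega
      push_cast [Nat.cast_sub hkj, Nat.cast_sub (by omega : 1 ≤ j)]
      ring
  have hsum : ∑ n ∈ Finset.Icc k m, H n
      = ∑ n ∈ Finset.Icc k m, h (X n)
        + ∑ j ∈ Finset.Icc (k+1) (τ-1), min M ((j:ℝ) - k) * f j := by
    rw [← key, ← Finset.sum_add_distrib]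
    exact Finset.sum_congr rfl fun n _ => hH n
  rw [hsum, mul_add, Finset.mul_sum]
  congr 1
  rw [Finset.mul_sum]
  apply Finset.sum_congr rfl
  intro j hj
  rw [← mul_assoc]
  congr 1
  rcases le_total M ((j:ℝ) - k) with hca | hca
  · rw [min_eq_left hca, min_eq_left (by rw [le_div_iff₀ hM]; linarith)]
    field_simp
  · rw [min_eq_right hca, min_eq_right (by rw [div_le_one hM]; linarith)]
    field_simp
end

section
/- Supermartingale argument for geometric tails (abstraction of the proof of Theorem 1): let (Zₙ)ₙ≥₀ be a Markov chain on Ω with V̄ : Ω → [1,∞), a small set C ⊆ Ω such that from any z ∈ C the event of interest occurs within the next step with probability at least ω > 0, drift K̄(V̄)(z) ≤ λ₀V̄(z) outside C with λ₀ ∈ (0,1), and B = max{1, sup_{z ∈ C} K̄(V̄)(z)/(λ₀V̄(z))} < ∞. Then Mₙ = λ₀⁻ⁿ B^{-N_{n-1}} V̄(Zₙ), where Nₙ counts visits to C up to time n, is a supermartingale, and consequently the hitting time τ of the event satisfies pr(τ > n) ≤ (1-ω)^j + E{V̄(Z₀)} λ₀ⁿ B^{j-1} for all integers n, j ≥ 0,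 yielding geometric tails pr(τ > n) ≤ C₀κ₀ⁿ for some C₀ < ∞, κ₀ ∈ (0,1) upon choosing j = ⌈n/m₀⌉ with m₀ such that λ₀B^{1/m₀} < 1. -/
open scoped Classical

open MeasureTheory ProbabilityTheory

/-!
Off `C` the drift condition makes `λ₀⁻ⁿ V(Zₙ)` a supermartingale, while a step from `C` can
increase it by a factor `B`; discounting by `B^{-N}` compensates exactly for these steps, so `M`
is a supermartingale.

If the chain survives up to time `n`, then either it visited `C` at least `j` times, each visit
giving a new chance `ω₀` of hitting `G` at the next step, which has probability at most
`(1 - ω₀)^j` (the process `1{survival} (1 - ω₀)^{(j - N)⁺}` is a supermartingale); or it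
visited `C` fewer than `j` times, so that `Mₙ ≥ λ₀⁻ⁿ B^{1-j}`, and Markov's inequality with
`E Mₙ ≤ E M₀ = E V(Z₀)` bounds the probability. Taking `j ≈ n / m₀` makes both terms geometric.
-/

noncomputable section

variable {Ω S : Type*}

/-- The paper's `N_{n-1}`: the number of visits to `C` strictly before time `n`. -/
def visitCount (Z : ℕ → Ω → S) (C : Set S) (n : ℕ) (ω : Ω) : ℕ :=
  ∑ k ∈ Finset.range n, if Z k ω ∈ C then 1 else 0

def survivalSet (Z : ℕ → Ω → S) (G : Set S) (n : ℕ) : Set Ω :=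
  {ω | ∀ i ≤ n, Z i ω ∉ G}

/-- Each visit to `C` multiplies the conditional survival probability by at most `ρ`, which makes
this a supermartingale. The exponent is truncated subtraction in `ℕ`, so once `j` visits have been
made the weight is just the indicator of survival. -/
def survivalWeight (Z : ℕ → Ω → S) (C G : Set S) (ρ : ℝ) (j n : ℕ) (ω : Ω) : ℝ :=
  (survivalSet Z G n).indicator 1 ω * ρ ^ (j - visitCount Z C n ω)

variable {Z : ℕ → Ω → S} {C G : Set S}

@[simp]
theorem visitCount_zero (ω : Ω) : visitCount Z C 0 ω = 0 := by
  simp [visitCount]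

theorem visitCount_succ (n : ℕ) (ω : Ω) :
    visitCount Z C (n + 1) ω = visitCount Z C n ω + if Z n ω ∈ C then 1 else 0 :=
  Finset.sum_range_succ _ _

theorem survivalSet_succ (n : ℕ) :
    survivalSet Z G (n + 1) = survivalSet Z G n ∩ Z (n + 1) ⁻¹' Gᶜ := by
  ext ω
  simp [survivalSet, Nat.le_succ_iff, or_imp, forall_and]

theorem mem_survivalSet_of_lt_sInf {n : ℕ} {ω : Ω} (h : n < sInf {k | Z k ω ∈ G}) :
    ω ∈ survivalSet Z G n :=
  fun _ hi hiG => (Nat.sInf_le hiG).not_gt (hi.trans_lt h)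

theorem survivalWeight_nonneg {ρ : ℝ} (hρ0 : 0 ≤ ρ) (j n : ℕ) (ω : Ω) :
    0 ≤ survivalWeight Z C G ρ j n ω :=
  mul_nonneg (Set.indicator_nonneg (fun _ _ => zero_le_one) _) (pow_nonneg hρ0 _)

theorem survivalWeight_le_one {ρ : ℝ} (hρ0 : 0 ≤ ρ) (hρ1 : ρ ≤ 1) (j n : ℕ) (ω : Ω) :
    survivalWeight Z C G ρ j n ω ≤ 1 :=
  mul_le_one₀ (Set.indicator_le_self' (fun _ _ => zero_le_one) ω) (pow_nonneg hρ0 _)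
    (pow_le_one₀ hρ0 hρ1)

variable [m : MeasurableSpace Ω] [MeasurableSpace S] {𝔽 : Filtration ℕ m}

theorem measurable_visitCount (hadapted : ∀ n, Measurable[𝔽 n] (Z n)) (hC : MeasurableSet C)
    {n k : ℕ} (hnk : n ≤ k + 1) : Measurable[𝔽 k] (visitCount Z C n) :=
  Finset.measurable_sum _ fun i hi =>
    Measurable.ite ((hadapted i).mono (𝔽.mono (by simp at hi; omega)) le_rfl hC)
      measurable_const measurable_const

theorem measurableSet_survivalSet (hadapted : ∀ n, Measurable[𝔽 n] (Z n))
    (hG : MeasurableSet G) (n : ℕ) : MeasurableSet[𝔽 n] (survivalSet Z G n) := by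
  simp only [survivalSet, Set.ofPred_forall]
  exact .iInter fun i => .iInter fun hi => (hadapted i).mono (𝔽.mono hi) le_rfl hG.compl

def IsMarkovChain (𝔽 : Filtration ℕ m) (K : Kernel S S) (Z : ℕ → Ω → S) (P : Measure Ω) :
    Prop :=
  ∀ (n : ℕ) (g : S → ℝ), Measurable g → Integrable (fun ω => g (Z (n + 1) ω)) P →
    P[(fun ω => g (Z (n + 1) ω))|𝔽 n] =ᵐ[P] fun ω => ∫ y, g y ∂(K (Z n ω))

variable {K : Kernel S S} {P : Measure Ω}

theorem IsMarkovChain.condExp_mul_comp_succ (hZ : IsMarkovChain 𝔽 K Z P) {n : ℕ} {F : Ω → ℝ}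
    {g : S → ℝ} (hF : StronglyMeasurable[𝔽 n] F) (hg : Measurable g)
    (hgZ : Integrable (fun ω => g (Z (n + 1) ω)) P)
    (hFg : Integrable (fun ω => F ω * g (Z (n + 1) ω)) P) :
    P[(fun ω => F ω * g (Z (n + 1) ω))|𝔽 n] =ᵐ[P] fun ω => F ω * ∫ y, g y ∂(K (Z n ω)) :=
  (condExp_mul_of_stronglyMeasurable_left hF hFg hgZ).trans
    ((Filter.EventuallyEq.refl _ F).mul (hZ n g hg hgZ))

theorem IsMarkovChain.supermartingale_of_le [IsFiniteMeasure P] (hZ : IsMarkovChain 𝔽 K Z P)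
    {X F : ℕ → Ω → ℝ} {g : S → ℝ} (hX : StronglyAdapted 𝔽 X) (hXint : ∀ n, Integrable (X n) P)
    (hF : ∀ n, StronglyMeasurable[𝔽 n] (F n)) (hg : Measurable g)
    (hgZ : ∀ n, Integrable (fun ω => g (Z (n + 1) ω)) P)
    (hXsucc : ∀ n, X (n + 1) = fun ω => F n ω * g (Z (n + 1) ω))
    (hle : ∀ n ω, F n ω * ∫ y, g y ∂(K (Z n ω)) ≤ X n ω) : Supermartingale X 𝔽 P := by
  refine supermartingale_nat hX hXint fun n => ?_
  rw [hXsucc n]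
  exact (hZ.condExp_mul_comp_succ (hF n) hg (hgZ n) (hXsucc n ▸ hXint (n + 1))).trans_le
    (ae_of_all _ (hle n))

theorem MeasureTheory.Supermartingale.mul_measureReal_le_integral_zero [IsFiniteMeasure P]
    {X : ℕ → Ω → ℝ} (hX : Supermartingale X 𝔽 P) {n : ℕ} (hnn : 0 ≤ᵐ[P] X n) {a : ℝ}
    (ha : 0 ≤ a) {E : Set Ω} (hE : ∀ ω ∈ E, a ≤ X n ω) : a * P.real E ≤ ∫ ω, X 0 ω ∂P :=
  calc a * P.real E ≤ a * P.real {ω | a ≤ X n ω} :=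
        mul_le_mul_of_nonneg_left (measureReal_mono hE) ha
    _ ≤ ∫ ω, X n ω ∂P := mul_meas_ge_le_integral_of_nonneg hnn (hX.integrable n) a
    _ ≤ ∫ ω, X 0 ω ∂P := by simpa using hX.setIntegral_le (Nat.zero_le n) MeasurableSet.univ

theorem IsMarkovChain.supermartingale_lyapunov [IsFiniteMeasure P] (hZ : IsMarkovChain 𝔽 K Z P)
    (hadapted : ∀ n, Measurable[𝔽 n] (Z n)) {V : S → ℝ} (hVm : Measurable V)
    (hVint : ∀ n, Integrable (fun ω => V (Z n ω)) P) (hC : MeasurableSet C)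
    {lam B : ℝ} (hlam : 0 < lam) (hB : 1 ≤ B)
    (hdrift : ∀ z ∉ C, ∫ w, V w ∂(K z) ≤ lam * V z)
    (hBdrift : ∀ z ∈ C, ∫ w, V w ∂(K z) ≤ lam * B * V z) :
    Supermartingale
      (fun (n : ℕ) ω => lam ^ (-(n : ℤ)) * B ^ (-(visitCount Z C n ω : ℤ)) * V (Z n ω)) 𝔽 P := by
  have hB0 : 0 < B := zero_lt_one.trans_le hB
  have hweight : ∀ {n k : ℕ}, n ≤ k + 1 →
      Measurable[𝔽 k] fun ω => lam ^ (-(n : ℤ)) * B ^ (-(visitCount Z C n ω : ℤ)) :=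
    fun hnk => measurable_const.mul
      ((measurable_from_top (f := fun i : ℕ => B ^ (-(i : ℤ)))).comp
        (measurable_visitCount hadapted hC hnk))
  have hdrift_ite : ∀ z, ∫ w, V w ∂(K z) ≤ lam * B ^ (if z ∈ C then 1 else 0) * V z := by
    intro z
    split_ifs with hz
    · simpa using hBdrift z hz
    · simpa using hdrift z hz
  refine hZ.supermartingale_of_le (F := fun n ω => lam ^ (-((n + 1 : ℕ) : ℤ)) *
      B ^ (-(visitCount Z C (n + 1) ω : ℤ))) (fun n => ((hweight n.le_succ).mul
      (hVm.comp (hadapted n))).stronglyMeasurable) (fun n => ?_)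
    (fun n => (hweight le_rfl).stronglyMeasurable) hVm (fun n => hVint (n + 1)) (fun n => rfl)
    (fun n ω => ?_)
  · refine (hVint n).bdd_mul (c := lam ^ (-(n : ℤ)))
      ((hweight n.le_succ).mono (𝔽.le n) le_rfl).aestronglyMeasurable (ae_of_all _ fun ω => ?_)
    rw [Real.norm_of_nonneg (by positivity)]
    exact mul_le_of_le_one_right (by positivity)
      (zpow_le_one_of_nonpos₀ hB (neg_nonpos.2 (Nat.cast_nonneg _)))
  · calc _ ≤ lam ^ (-((n + 1 : ℕ) : ℤ)) * B ^ (-(visitCount Z C (n + 1) ω : ℤ)) *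
          (lam * B ^ (if Z n ω ∈ C then 1 else 0) * V (Z n ω)) :=
          mul_le_mul_of_nonneg_left (hdrift_ite _) (by positivity)
      _ = _ := by
          simp only [visitCount_succ, zpow_neg, zpow_natCast, pow_succ, pow_add]
          field_simp

theorem IsMarkovChain.supermartingale_survivalWeight [IsFiniteMeasure P] [IsMarkovKernel K]
    (hZ : IsMarkovChain 𝔽 K Z P) (hadapted : ∀ n, Measurable[𝔽 n] (Z n))
    (hC : MeasurableSet C) (hG : MeasurableSet G) {ρ : ℝ} (hρ0 : 0 ≤ ρ) (hρ1 : ρ ≤ 1)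
    (hsmall : ∀ z ∈ C, (K z).real Gᶜ ≤ ρ) (j : ℕ) :
    Supermartingale (survivalWeight Z C G ρ j) 𝔽 P := by
  have hweight : ∀ {n l k : ℕ}, n ≤ k → l ≤ k + 1 → Measurable[𝔽 k] fun ω =>
      (survivalSet Z G n).indicator 1 ω * ρ ^ (j - visitCount Z C l ω) :=
    fun hnk hlk => (measurable_const.indicator ((𝔽.mono hnk) _
      (measurableSet_survivalSet hadapted hG _))).mul
      ((measurable_from_top (f := fun i : ℕ => ρ ^ (j - i))).comp
        (measurable_visitCount hadapted hC hlk))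
  have hadaptedW : StronglyAdapted 𝔽 (survivalWeight Z C G ρ j) := fun n =>
    (hweight le_rfl n.le_succ).stronglyMeasurable
  have hg : Measurable (Gᶜ.indicator (1 : S → ℝ)) := measurable_const.indicator hG.compl
  have hKle : ∀ z, (K z).real Gᶜ ≤ ρ ^ (if z ∈ C then 1 else 0) := by
    intro z
    split_ifs with hz
    · simpa using hsmall z hz
    · simp
  refine hZ.supermartingale_of_le hadaptedW (fun n => ?_)
    (fun n => (hweight le_rfl le_rfl).stronglyMeasurable) hg (fun n => ?_) (fun n => ?_)
    (fun n ω => ?_)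
  · refine .of_bound ((hadaptedW n).mono (𝔽.le n)).aestronglyMeasurable 1
      (ae_of_all _ fun ω => ?_)
    rw [Real.norm_of_nonneg (survivalWeight_nonneg hρ0 j n ω)]
    exact survivalWeight_le_one hρ0 hρ1 j n ω
  · refine .of_bound (hg.comp ((hadapted (n + 1)).mono (𝔽.le _) le_rfl)).aestronglyMeasurable 1
      (ae_of_all _ fun ω => ?_)
    by_cases h : Z (n + 1) ω ∈ Gᶜ <;> simp [h]
  · funext ω
    rw [survivalWeight, survivalSet_succ, Set.inter_indicator_one]
    simp only [Pi.mul_apply, Set.indicator_apply, Set.mem_preimage, Pi.one_apply]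
    ring
  · rw [integral_indicator_one hG.compl, survivalWeight, visitCount_succ, mul_assoc]
    refine mul_le_mul_of_nonneg_left ?_ (Set.indicator_nonneg (fun _ _ => zero_le_one) _)
    calc _ ≤ ρ ^ (j - (visitCount Z C n ω + if Z n ω ∈ C then 1 else 0)) *
          ρ ^ (if Z n ω ∈ C then 1 else 0) :=
          mul_le_mul_of_nonneg_left (hKle _) (pow_nonneg hρ0 _)
      _ ≤ ρ ^ (j - visitCount Z C n ω) := by
          rw [← pow_add]
          exact pow_le_pow_of_le_one hρ0 hρ1 (by omega)

theorem IsMarkovChain.measureReal_survivalSet_inter_le [IsProbabilityMeasure P]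
    [IsMarkovKernel K] (hZ : IsMarkovChain 𝔽 K Z P) (hadapted : ∀ n, Measurable[𝔽 n] (Z n))
    (hC : MeasurableSet C) (hG : MeasurableSet G) {ρ : ℝ} (hρ0 : 0 ≤ ρ) (hρ1 : ρ ≤ 1)
    (hsmall : ∀ z ∈ C, (K z).real Gᶜ ≤ ρ) (n j : ℕ) :
    P.real (survivalSet Z G n ∩ {ω | j ≤ visitCount Z C n ω}) ≤ ρ ^ j := by
  have hW := hZ.supermartingale_survivalWeight hadapted hC hG hρ0 hρ1 hsmall j
  have hE : ∀ ω ∈ survivalSet Z G n ∩ {ω | j ≤ visitCount Z C n ω},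
      1 ≤ survivalWeight Z C G ρ j n ω := by
    rintro ω ⟨hs, hj⟩
    simp [survivalWeight, hs, Nat.sub_eq_zero_of_le hj]
  have hW0 : ∀ ω, survivalWeight Z C G ρ j 0 ω ≤ ρ ^ j := fun ω => by
    simp only [survivalWeight, visitCount_zero, Nat.sub_zero]
    exact mul_le_of_le_one_left (pow_nonneg hρ0 j)
      (Set.indicator_le_self' (fun _ _ => zero_le_one) ω)
  calc P.real _ = 1 * P.real _ := (one_mul _).symm
    _ ≤ ∫ ω, survivalWeight Z C G ρ j 0 ω ∂P := hW.mul_measureReal_le_integral_zero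
        (ae_of_all _ (survivalWeight_nonneg hρ0 j n)) zero_le_one hE
    _ ≤ ∫ _, ρ ^ j ∂P := integral_mono (hW.integrable 0) (integrable_const _) hW0
    _ = ρ ^ j := by simp

theorem IsMarkovChain.measureReal_visitCount_lt_le [IsFiniteMeasure P]
    (hZ : IsMarkovChain 𝔽 K Z P) (hadapted : ∀ n, Measurable[𝔽 n] (Z n)) {V : S → ℝ}
    (hVm : Measurable V) (hV1 : ∀ s, 1 ≤ V s) (hVint : ∀ n, Integrable (fun ω => V (Z n ω)) P)
    (hC : MeasurableSet C) {lam B : ℝ} (hlam : 0 < lam) (hB : 1 ≤ B)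
    (hdrift : ∀ z ∉ C, ∫ w, V w ∂(K z) ≤ lam * V z)
    (hBdrift : ∀ z ∈ C, ∫ w, V w ∂(K z) ≤ lam * B * V z) (n j : ℕ) :
    P.real {ω | visitCount Z C n ω < j} ≤ (∫ ω, V (Z 0 ω) ∂P) * lam ^ n * B ^ ((j : ℤ) - 1) := by
  have hM := hZ.supermartingale_lyapunov hadapted hVm hVint hC hlam hB hdrift hBdrift
  have hB0 : 0 < B := zero_lt_one.trans_le hB
  set a := lam ^ (-(n : ℤ)) * B ^ (1 - (j : ℤ)) with ha_def
  have ha : 0 < a := by positivity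
  have hE : ∀ ω ∈ {ω | visitCount Z C n ω < j},
      a ≤ lam ^ (-(n : ℤ)) * B ^ (-(visitCount Z C n ω : ℤ)) * V (Z n ω) := by
    intro ω hω
    have hexp : 1 - (j : ℤ) ≤ -(visitCount Z C n ω : ℤ) := by
      simp only [Set.mem_ofPred_eq] at hω
      omega
    calc a = a * 1 := (mul_one a).symm
      _ ≤ _ := mul_le_mul (mul_le_mul_of_nonneg_left (zpow_le_zpow_right₀ hB hexp)
          (by positivity)) (hV1 _) zero_le_one (by positivity)
  have key := hM.mul_measureReal_le_integral_zero (n := n)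
    (ae_of_all _ fun ω => mul_nonneg (by positivity) (zero_le_one.trans (hV1 _))) ha.le hE
  simp only [CharP.cast_eq_zero, neg_zero, zpow_zero, visitCount_zero, one_mul] at key
  calc P.real _ ≤ (∫ ω, V (Z 0 ω) ∂P) / a := (le_div_iff₀' ha).2 key
    _ = _ := by
      rw [ha_def, div_eq_mul_inv, mul_inv, ← zpow_neg, ← zpow_neg, neg_neg, neg_sub,
        zpow_natCast, mul_assoc]

end

theorem pow_div_add_one_le_rpow_pow {ρ : ℝ} (hρ0 : 0 ≤ ρ) (hρ1 : ρ ≤ 1) {m : ℕ} (hm : 0 < m)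
    (n : ℕ) : ρ ^ (n / m + 1) ≤ (ρ ^ ((1 : ℝ) / m)) ^ n := by
  have hmR : (0 : ℝ) < m := Nat.cast_pos.2 hm
  have hle : (n : ℝ) / m ≤ ((n / m + 1 : ℕ) : ℝ) := by
    rw [div_le_iff₀ hmR]
    have h : n ≤ (n / m + 1) * m := by
      rw [Nat.succ_mul]
      exact (Nat.lt_div_mul_add hm).le
    exact_mod_cast h
  rw [← Real.rpow_natCast, ← Real.rpow_natCast _ n, ← Real.rpow_mul hρ0, one_div_mul_eq_div]
  exact Real.rpow_le_rpow_of_exponent_ge' hρ0 hρ1 (by positivity) hle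

theorem pow_div_le_rpow_pow {B : ℝ} (hB : 1 ≤ B) (m n : ℕ) :
    B ^ (n / m) ≤ (B ^ ((1 : ℝ) / m)) ^ n := by
  rw [← Real.rpow_natCast, ← Real.rpow_natCast _ n, ← Real.rpow_mul (by linarith),
    one_div_mul_eq_div]
  exact Real.rpow_le_rpow_of_exponent_le hB Nat.cast_div_le

theorem exists_geometric_bound {p : ℕ → ℝ} {ρ c lam B : ℝ} (hρ0 : 0 ≤ ρ) (hρ1 : ρ < 1)
    (hc : 0 ≤ c) (hlam : 0 < lam) (hB : 1 ≤ B) {m : ℕ} (hm : 0 < m)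
    (hκ : lam * B ^ ((1 : ℝ) / m) < 1)
    (hp : ∀ n j : ℕ, p n ≤ ρ ^ j + c * lam ^ n * B ^ ((j : ℤ) - 1)) :
    ∃ C₀ ≥ (0 : ℝ), ∃ κ₀ ∈ Set.Ioo (0 : ℝ) 1, ∀ n, p n ≤ C₀ * κ₀ ^ n := by
  set κ₁ := ρ ^ ((1 : ℝ) / m)
  set κ₂ := lam * B ^ ((1 : ℝ) / m)
  have hκ₁ : 0 ≤ κ₁ := Real.rpow_nonneg hρ0 _
  have hκ₂ : 0 < κ₂ := mul_pos hlam (Real.rpow_pos_of_pos (by linarith) _)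
  have hκ₁1 : κ₁ < 1 := Real.rpow_lt_one hρ0 hρ1 (by positivity)
  refine ⟨1 + c, by linarith, max κ₁ κ₂, ⟨hκ₂.trans_le (le_max_right _ _), max_lt hκ₁1 hκ⟩,
    fun n => ?_⟩
  -- `j = n / m + 1` stands for the paper's `⌈n / m⌉`
  have hBj : B ^ (((n / m + 1 : ℕ) : ℤ) - 1) = B ^ (n / m) := by
    rw [Nat.cast_succ, add_sub_cancel_right, zpow_natCast]
  calc p n ≤ ρ ^ (n / m + 1) + c * lam ^ n * B ^ (n / m) := hBj ▸ hp n (n / m + 1)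
    _ ≤ κ₁ ^ n + c * κ₂ ^ n := by
      rw [mul_assoc, mul_pow]
      gcongr
      exacts [pow_div_add_one_le_rpow_pow hρ0 hρ1.le hm n, pow_div_le_rpow_pow hB m n]
    _ ≤ max κ₁ κ₂ ^ n + c * max κ₁ κ₂ ^ n := by gcongr <;> simp
    _ = (1 + c) * max κ₁ κ₂ ^ n := by ring

theorem stmt14_general {Ωp S : Type*} [m : MeasurableSpace Ωp] [MeasurableSpace S]
    (P : Measure Ωp) [IsProbabilityMeasure P]
    (K : Kernel S S) [IsMarkovKernel K]
    (Z : ℕ → Ωp → S)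
    (𝔽 : Filtration ℕ m)
    (hadapted : ∀ n, Measurable[𝔽 n] (Z n))
    -- the Markov property with respect to the kernel `K`
    (hMarkov : ∀ (n : ℕ) (g : S → ℝ), Measurable g →
      Integrable (fun ω => g (Z (n + 1) ω)) P →
      P[(fun ω => g (Z (n + 1) ω))|𝔽 n] =ᵐ[P] fun ω => ∫ y, g y ∂(K (Z n ω)))
    (V : S → ℝ) (hVm : Measurable V) (hV1 : ∀ s, 1 ≤ V s)
    (hVint : ∀ n, Integrable (fun ω => V (Z n ω)) P)
    (C G : Set S) (hC : MeasurableSet C) (hG : MeasurableSet G)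
    (ω₀ lam₀ B : ℝ) (hω₀ : 0 < ω₀) (hω₀1 : ω₀ ≤ 1)
    (hlam : lam₀ ∈ Set.Ioo (0 : ℝ) 1)
    (hsmall : ∀ z ∈ C, ENNReal.ofReal ω₀ ≤ K z G)
    (hdrift : ∀ z ∉ C, ∫ w, V w ∂(K z) ≤ lam₀ * V z)
    (hB1 : 1 ≤ B)
    (hBdrift : ∀ z ∈ C, ∫ w, V w ∂(K z) ≤ lam₀ * B * V z)
    (τ : Ωp → ℕ) (hτ : ∀ ω, τ ω = sInf {n | Z n ω ∈ G})
    (N : ℕ → Ωp → ℕ)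
    (hN : ∀ n ω, (N n ω : ℕ) = ∑ k ∈ Finset.range n, if Z k ω ∈ C then 1 else 0)
    (M : ℕ → Ωp → ℝ)
    (hM : ∀ n ω, M n ω = lam₀ ^ (-(n : ℤ)) * B ^ (-(N n ω : ℤ)) * V (Z n ω)) :
    Supermartingale M 𝔽 P ∧
    (∀ n j : ℕ, (P {ω | n < τ ω}).toReal
        ≤ (1 - ω₀) ^ j + (∫ ω, V (Z 0 ω) ∂P) * lam₀ ^ n * B ^ ((j : ℤ) - 1)) ∧
    (∀ m₀ : ℕ, 0 < m₀ → lam₀ * B ^ ((1 : ℝ) / m₀) < 1 →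
      ∃ C₀ ≥ (0 : ℝ), ∃ κ₀ ∈ Set.Ioo (0 : ℝ) 1,
        ∀ n : ℕ, (P {ω | n < τ ω}).toReal ≤ C₀ * κ₀ ^ n) := by
  obtain ⟨hlam0, -⟩ := hlam
  obtain rfl : N = visitCount Z C := funext₂ hN
  obtain rfl : M = fun (n : ℕ) ω =>
      lam₀ ^ (-(n : ℤ)) * B ^ (-(visitCount Z C n ω : ℤ)) * V (Z n ω) := funext₂ hM
  have hZ : IsMarkovChain 𝔽 K Z P := hMarkov
  have hstay : ∀ z ∈ C, (K z).real Gᶜ ≤ 1 - ω₀ := fun z hz => by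
    rw [probReal_compl_eq_one_sub hG, Measure.real_def]
    linarith [(ENNReal.ofReal_le_iff_le_toReal (measure_ne_top _ _)).1 (hsmall z hz)]
  have htail : ∀ n j : ℕ, P.real {ω | n < τ ω}
      ≤ (1 - ω₀) ^ j + (∫ ω, V (Z 0 ω) ∂P) * lam₀ ^ n * B ^ ((j : ℤ) - 1) := by
    intro n j
    have hsub : {ω | n < τ ω} ⊆ (survivalSet Z G n ∩ {ω | j ≤ visitCount Z C n ω}) ∪
        {ω | visitCount Z C n ω < j} := fun ω hω => by
      by_cases hj : j ≤ visitCount Z C n ω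
      · exact .inl ⟨mem_survivalSet_of_lt_sInf (hτ ω ▸ hω), hj⟩
      · exact .inr (not_le.1 hj)
    calc P.real {ω | n < τ ω} ≤ _ := measureReal_mono hsub
      _ ≤ _ := measureReal_union_le _ _
      _ ≤ _ := add_le_add
          (hZ.measureReal_survivalSet_inter_le hadapted hC hG (by linarith) (by linarith) hstay
            n j)
          (hZ.measureReal_visitCount_lt_le hadapted hVm hV1 hVint hC hlam0 hB1 hdrift hBdrift n j)
  exact ⟨hZ.supermartingale_lyapunov hadapted hVm hVint hC hlam0 hB1 hdrift hBdrift, htail,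
    fun m₀ hm₀ hκ => exists_geometric_bound (by linarith) (by linarith)
      (integral_nonneg fun ω => zero_le_one.trans (hV1 _)) hlam0 hB1 hm₀ hκ htail⟩

/-- Supermartingale argument for geometric tails (abstraction of the proof of Theorem 1):
for a Markov chain `Z` with kernel `K` and Lyapunov function `V ≥ 1`, a small set `C`
from which the target set `G` is reached in one step with probability at least `ω₀`,
drift `K(V) ≤ λ₀V` off `C`, and `K(V) ≤ λ₀ B V` on `C` (with `B ≥ 1`), the process
`Mₙ = λ₀⁻ⁿ B^{-N_{n-1}} V(Zₙ)` (where `N n` counts visits to `C` before time `n`) is a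
supermartingale; the hitting time `τ` of `G` satisfies
`pr(τ > n) ≤ (1-ω₀)ʲ + E[V(Z₀)] λ₀ⁿ B^{j-1}` for all `n, j`, whence geometric tails. -/
theorem stmt14 {Ωp S : Type*} [m : MeasurableSpace Ωp] [MeasurableSpace S]
    (P : Measure Ωp) [IsProbabilityMeasure P]
    (K : Kernel S S) [IsMarkovKernel K]
    (Z : ℕ → Ωp → S) (hZm : ∀ n, Measurable (Z n))
    (𝔽 : Filtration ℕ m)
    (hadapted : ∀ n, Measurable[𝔽 n] (Z n))
    -- the Markov property with respect to the kernel `K`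
    (hMarkov : ∀ (n : ℕ) (g : S → ℝ), Measurable g →
      Integrable (fun ω => g (Z (n + 1) ω)) P →
      P[(fun ω => g (Z (n + 1) ω))|𝔽 n] =ᵐ[P] fun ω => ∫ y, g y ∂(K (Z n ω)))
    (V : S → ℝ) (hVm : Measurable V) (hV1 : ∀ s, 1 ≤ V s)
    (hVint : ∀ n, Integrable (fun ω => V (Z n ω)) P)
    (C G : Set S) (hC : MeasurableSet C) (hG : MeasurableSet G)
    (ω₀ lam₀ B : ℝ) (hω₀ : 0 < ω₀) (hω₀1 : ω₀ ≤ 1)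
    (hlam : lam₀ ∈ Set.Ioo (0 : ℝ) 1)
    (hsmall : ∀ z ∈ C, ENNReal.ofReal ω₀ ≤ K z G)
    (hdrift : ∀ z ∉ C, ∫ w, V w ∂(K z) ≤ lam₀ * V z)
    (hB1 : 1 ≤ B)
    (hBdrift : ∀ z ∈ C, ∫ w, V w ∂(K z) ≤ lam₀ * B * V z)
    (τ : Ωp → ℕ) (hτ : ∀ ω, τ ω = sInf {n | Z n ω ∈ G})
    (N : ℕ → Ωp → ℕ)
    (hN : ∀ n ω, (N n ω : ℕ) = ∑ k ∈ Finset.range n, if Z k ω ∈ C then 1 else 0)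
    (M : ℕ → Ωp → ℝ)
    (hM : ∀ n ω, M n ω = lam₀ ^ (-(n : ℤ)) * B ^ (-(N n ω : ℤ)) * V (Z n ω)) :
    Supermartingale M 𝔽 P ∧
    (∀ n j : ℕ, (P {ω | n < τ ω}).toReal
        ≤ (1 - ω₀) ^ j + (∫ ω, V (Z 0 ω) ∂P) * lam₀ ^ n * B ^ ((j : ℤ) - 1)) ∧
    (∀ m₀ : ℕ, 0 < m₀ → lam₀ * B ^ ((1 : ℝ) / m₀) < 1 →
      ∃ C₀ ≥ (0 : ℝ), ∃ κ₀ ∈ Set.Ioo (0 : ℝ) 1,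
        ∀ n : ℕ, (P {ω | n < τ ω}).toReal ≤ C₀ * κ₀ ^ n) :=
  stmt14_general (m := m) P K Z 𝔽 hadapted hMarkov V hVm hV1 hVint C G hC hG ω₀ lam₀ B hω₀ hω₀1 hlam
    hsmall hdrift hB1 hBdrift τ hτ N hN M hM
end
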